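/- For the cycle graph C_5 with vertices v1,...,v5 (in cyclic order) and single-peaked preferences, the sequential Pareto rule with checking order v1, v2, v5, v3, v4 is a false-name-proof and Pareto efficient social choice function. -/

import Mathlib

namespace FNPFL

variable {V : Type*}

/-- Single-peaked Pareto domination: `v` dominates `w` under profile `θ`
(agents prefer smaller distance). -/
def Dom (d : V → V → ℕ) (θ : Multiset V) (v w : V) : Prop :=
  (∀ i ∈ θ, d i v ≤ d i w) ∧ ∃ i ∈ θ, d i v < d i w

/-- `w` is Pareto efficient under `θ` (single-peaked). -/
def IsPE (d : V → V → ℕ) (θ : Multiset V) (w : V) : Prop :=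
  ∀ v, ¬ Dom d θ v w

/-- A social choice function is Pareto efficient (single-peaked). -/
def ParetoEfficient (d : V → V → ℕ) (f : Multiset V → V) : Prop :=
  ∀ θ : Multiset V, θ ≠ 0 → IsPE d θ (f θ)

/-- False-name-proofness (single-peaked): an agent `i ∈ θ` replaces her report by
any nonempty multiset `fake` of reports (a misreport plus possibly extra fake
identities) and cannot obtain an outcome strictly closer to her true location. -/
def FalseNameProof [DecidableEq V] (d : V → V → ℕ) (f : Multiset V → V) : Prop :=
  ∀ θ : Multiset V, ∀ i ∈ θ, ∀ fake : Multiset V, fake ≠ 0 →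
    d i (f θ) ≤ d i (f (θ.erase i + fake))

/-- Truthfulness (single-peaked): no agent benefits by a single misreport. -/
def Truthful [DecidableEq V] (d : V → V → ℕ) (f : Multiset V → V) : Prop :=
  ∀ θ : Multiset V, ∀ i ∈ θ, ∀ x : V,
    d i (f θ) ≤ d i (f (θ.erase i + {x}))

/-- `f` is the sequential Pareto rule with ordering `σ` (single-peaked):
on every nonempty profile it outputs the first Pareto efficient vertex in `σ`. -/
def SeqParetoRule (d : V → V → ℕ) (σ : List V) (f : Multiset V → V) : Prop :=
  ∀ θ : Multiset V, θ ≠ 0 →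
    ∃ l₁ l₂, σ = l₁ ++ f θ :: l₂ ∧ IsPE d θ (f θ) ∧ ∀ u ∈ l₁, ¬ IsPE d θ u

/-- Single-dipped Pareto domination: `v` dominates `w` under `θ`
(agents prefer larger distance). -/
def DomD (d : V → V → ℕ) (θ : Multiset V) (v w : V) : Prop :=
  (∀ i ∈ θ, d i w ≤ d i v) ∧ ∃ i ∈ θ, d i w < d i v

/-- `w` is Pareto efficient under `θ` (single-dipped). -/
def IsPED (d : V → V → ℕ) (θ : Multiset V) (w : V) : Prop :=
  ∀ v, ¬ DomD d θ v w

/-- Pareto efficiency of an SCF (single-dipped). -/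
def ParetoEfficientD (d : V → V → ℕ) (f : Multiset V → V) : Prop :=
  ∀ θ : Multiset V, θ ≠ 0 → IsPED d θ (f θ)

/-- False-name-proofness (single-dipped): no agent can obtain an outcome strictly
farther from her true location by misreporting and/or adding fake identities. -/
def FalseNameProofD [DecidableEq V] (d : V → V → ℕ) (f : Multiset V → V) : Prop :=
  ∀ θ : Multiset V, ∀ i ∈ θ, ∀ fake : Multiset V, fake ≠ 0 →
    d i (f (θ.erase i + fake)) ≤ d i (f θ)

/-- Sequential Pareto rule with ordering `σ` (single-dipped). -/
def SeqParetoRuleD (d : V → V → ℕ) (σ : List V) (f : Multiset V → V) : Prop :=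
  ∀ θ : Multiset V, θ ≠ 0 →
    ∃ l₁ l₂, σ = l₁ ++ f θ :: l₂ ∧ IsPED d θ (f θ) ∧ ∀ u ∈ l₁, ¬ IsPED d θ u

/-- Graph distance on the cycle `C_k` with vertices `ZMod k`. -/
def cycleDist (k : ℕ) (v w : ZMod k) : ℕ := min (v - w).val (w - v).val

/-- Manhattan (= graph) distance on a 2-dimensional grid. -/
def gridDist {l m : ℕ} (u v : Fin l × Fin m) : ℕ :=
  Nat.dist u.1.val v.1.val + Nat.dist u.2.val v.2.val

end FNPFL

open FNPFL

/-! Pareto efficiency of a vertex depends only on the set of reported locations, so the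
sequential Pareto rule is a function of the support of the profile. An agent at `i` who
misreports and adds fake identities turns the support `S` into some `T ⊇ S \ {i}`.
False-name-proofness therefore reduces to a statement about pairs of subsets of the five
vertices, which is checked exhaustively. -/

namespace FNPFL

section

variable {V : Type*} [Fintype V] (d : V → V → ℕ)

-- `∃ i ∈ θ` over a multiset has no global `Decidable` instance.
instance (θ : Multiset V) (w : V) : Decidable (IsPE d θ w) :=
  have := @Multiset.decidableExistsMultiset V θ
  inferInstanceAs (Decidable (∀ v, ¬ ((∀ i ∈ θ, d i v ≤ d i w) ∧ ∃ i ∈ θ, d i v < d i w)))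

def paretoFirst (σ : List V) (θ : Multiset V) : Option V :=
  σ.find? (IsPE d θ ·)

end

variable {V : Type*} {d : V → V → ℕ}

theorem isPE_congr {θ θ' : Multiset V} (h : ∀ i, i ∈ θ ↔ i ∈ θ') (w : V) :
    IsPE d θ w ↔ IsPE d θ' w := by
  simp only [IsPE, Dom, h]

theorem SeqParetoRule.paretoEfficient {σ : List V} {f : Multiset V → V}
    (hf : SeqParetoRule d σ f) : ParetoEfficient d f := fun θ hθ => by
  obtain ⟨-, -, -, hpe, -⟩ := hf θ hθ
  exact hpe

variable [Fintype V]

theorem paretoFirst_congr (σ : List V) {θ θ' : Multiset V} (h : ∀ i, i ∈ θ ↔ i ∈ θ') :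
    paretoFirst d σ θ = paretoFirst d σ θ' := by
  simp only [paretoFirst, isPE_congr h]

theorem SeqParetoRule.paretoFirst_eq {σ : List V} {f : Multiset V → V}
    (hf : SeqParetoRule d σ f) {θ : Multiset V} (hθ : θ ≠ 0) :
    paretoFirst d σ θ = some (f θ) := by
  obtain ⟨l₁, l₂, hσ, hpe, hl⟩ := hf θ hθ
  exact List.find?_eq_some_iff_append.2
    ⟨decide_eq_true hpe, l₁, l₂, hσ, fun u hu => by simpa using hl u hu⟩

theorem SeqParetoRule.falseNameProof [DecidableEq V] {σ : List V} {f : Multiset V → V}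
    (hf : SeqParetoRule d σ f)
    (h : ∀ S T : Finset V, ∀ i ∈ S, S.erase i ⊆ T →
      ∀ a ∈ paretoFirst d σ S.1, ∀ b ∈ paretoFirst d σ T.1, d i a ≤ d i b) :
    FalseNameProof d f := by
  intro θ i hi fake hfake
  have hθ : θ ≠ 0 := fun h => by simp [h] at hi
  have hθ' : θ.erase i + fake ≠ 0 := by simp [hfake]
  have hsupp : θ.toFinset.erase i ⊆ (θ.erase i + fake).toFinset := by
    intro j hj
    obtain ⟨hji, hj⟩ := Finset.mem_erase.1 hj
    simp [Multiset.mem_erase_of_ne hji, Multiset.mem_toFinset.1 hj]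
  have hout {θ : Multiset V} (hθ : θ ≠ 0) : f θ ∈ paretoFirst d σ θ.toFinset.1 :=
    (paretoFirst_congr σ fun _ => Multiset.mem_toFinset).trans (hf.paretoFirst_eq hθ)
  exact h _ _ i (Multiset.mem_toFinset.2 hi) hsupp _ (hout hθ) _ (hout hθ')

end FNPFL

set_option synthInstance.maxSize 256 in
theorem cycle5_paretoFirst_no_gain : ∀ S T : Finset (ZMod 5), ∀ i ∈ S, S.erase i ⊆ T →
    ∀ a ∈ paretoFirst (cycleDist 5) [0, 1, 4, 2, 3] S.1,
    ∀ b ∈ paretoFirst (cycleDist 5) [0, 1, 4, 2, 3] T.1, cycleDist 5 i a ≤ cycleDist 5 i b := by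
  decide

/-- on `C_5` with single-peaked preferences, the sequential Pareto
rule with checking order `v1, v2, v5, v3, v4` is false-name-proof and Pareto
efficient. (Vertices `v1,…,v5` are `0,…,4 : ZMod 5` in cyclic order.) -/
theorem stmt4 (f : Multiset (ZMod 5) → ZMod 5)
    (hf : SeqParetoRule (cycleDist 5) [0, 1, 4, 2, 3] f) :
    FalseNameProof (cycleDist 5) f ∧ ParetoEfficient (cycleDist 5) f :=
  ⟨hf.falseNameProof cycle5_paretoFirst_no_gain, hf.paretoEfficient⟩
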